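/- arXiv:1810.06905 — 7 statements merged into one kernel-verified Lean document; each statement's English description precedes it below -/
import Mathlib

section
/- For the map π: Δ → Δ on the standard (d−1)-simplex defined by π(z)_i = z_i^α / (z_1^α + ⋯ + z_d^α) with α > 1, the vector field F(z) = −z + π(z) satisfies the identity ⟨∇H(z), F(z)⟩ = (α/H(z)) · Σ_{1≤i<j≤d} z_i z_j (z_i^{α−1} − z_j^{α−1})², where H(z) = z_1^α + ⋯ + z_d^α. -/
open Finset

theorem lyapunov_identity (d : ℕ) (hd : 2 ≤ d) (α : ℝ) (hα : 1 < α)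
    (z : Fin d → ℝ) (hz0 : ∀ i, 0 ≤ z i) (hz1 : ∑ i, z i = 1) :
    ∑ i, (α * z i ^ (α - 1)) * (-(z i) + z i ^ α / (∑ j, z j ^ α)) =
      (α / (∑ j, z j ^ α)) *
        ∑ i, ∑ j, (if i < j then z i * z j * (z i ^ (α - 1) - z j ^ (α - 1)) ^ 2 else 0) := by
  set S := ∑ j, z j ^ α with hS
  set T := ∑ j, z j ^ (2*α - 1) with hT
  have hxmul : ∀ (x : ℝ), 0 ≤ x → ∀ p q : ℝ, p + q ≠ 0 → x ^ p * x ^ q = x ^ (p+q) :=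
    fun x hx p q h => (Real.rpow_add' hx h).symm
  have hSpos : 0 < S := by
    have hne : (∑ i, z i) ≠ 0 := by rw [hz1]; norm_num
    obtain ⟨i, _, hi⟩ := Finset.exists_ne_zero_of_sum_ne_zero hne
    exact Finset.sum_pos' (fun j _ => Real.rpow_nonneg (hz0 j) α)
      ⟨i, Finset.mem_univ i, Real.rpow_pos_of_pos ((hz0 i).lt_of_ne (Ne.symm hi)) α⟩
  have hSne : S ≠ 0 := ne_of_gt hSpos
  have key1 : ∀ i, z i ^ (α-1) * z i = z i ^ α := by
    intro i
    have h := hxmul (z i) (hz0 i) (α-1) 1 (by linarith)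
    rw [Real.rpow_one] at h
    rw [h, show α - 1 + 1 = α by ring]
  have key2 : ∀ i, z i ^ (α-1) * z i ^ α = z i ^ (2*α - 1) := by
    intro i
    have h := hxmul (z i) (hz0 i) (α-1) α (by linarith)
    rw [h, show α - 1 + α = 2*α - 1 by ring]
  have key3 : ∀ i, z i * (z i ^ (α-1))^2 = z i ^ (2*α - 1) := by
    intro i
    have h1 := hxmul (z i) (hz0 i) (α-1) (α-1) (by linarith)
    have h2 := hxmul (z i) (hz0 i) 1 (α - 1 + (α - 1)) (by linarith)
    rw [Real.rpow_one] at h2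
    rw [pow_two, h1, h2, show 1 + (α - 1 + (α - 1)) = 2*α - 1 by ring]
  -- LHS
  have lhs_eq : ∑ i, (α * z i ^ (α - 1)) * (-(z i) + z i ^ α / S) = α * T / S - α * S := by
    have hterm : ∀ i ∈ Finset.univ, (α * z i ^ (α - 1)) * (-(z i) + z i ^ α / S)
        = α * (z i ^ (2*α - 1)) / S - α * (z i ^ α) := by
      intro i _
      have h : (α * z i ^ (α - 1)) * (-(z i) + z i ^ α / S)
          = α * (z i ^ (α-1) * z i ^ α) / S - α * (z i ^ (α-1) * z i) := by ring
      rw [h, key1 i, key2 i]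
    rw [Finset.sum_congr rfl hterm, Finset.sum_sub_distrib]
    rw [← Finset.sum_div, ← Finset.mul_sum, ← Finset.mul_sum, hT, hS]
  -- double sum
  set f : Fin d → Fin d → ℝ := fun i j => z i * z j * (z i ^ (α - 1) - z j ^ (α - 1)) ^ 2 with hf
  have hfsym : ∀ i j, f i j = f j i := by intro i j; simp only [hf]; ring
  have hexp : ∀ i j, f i j
      = z i ^ (2*α-1) * z j - 2 * (z i ^ α * z j ^ α) + z i * z j ^ (2*α-1) := by
    intro i j
    rw [← key3 i, ← key3 j, ← key1 i, ← key1 j]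
    simp only [hf]
    ring
  have hD : ∑ i, ∑ j, f i j = 2*T - 2*(S*S) := by
    have hterm : ∀ i ∈ Finset.univ, ∑ j, f i j
        = z i ^ (2*α-1) - 2 * (z i ^ α * S) + z i * T := by
      intro i _
      calc ∑ j, f i j
          = ∑ j, (z i ^ (2*α-1) * z j - 2 * (z i ^ α * z j ^ α) + z i * z j ^ (2*α-1)) := by
            exact Finset.sum_congr rfl fun j _ => hexp i j
        _ = z i ^ (2*α-1) * (∑ j, z j) - 2 * (z i ^ α * S) + z i * T := by
            rw [Finset.sum_add_distrib, Finset.sum_sub_distrib, ← Finset.mul_sum,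
              ← Finset.mul_sum, ← Finset.mul_sum, ← Finset.mul_sum, hS, hT]
        _ = z i ^ (2*α-1) - 2 * (z i ^ α * S) + z i * T := by rw [hz1, mul_one]
    rw [Finset.sum_congr rfl hterm, Finset.sum_add_distrib, Finset.sum_sub_distrib,
      ← Finset.mul_sum, ← Finset.sum_mul, ← hT, ← Finset.sum_mul, ← hS, hz1]
    ring
  have hsplit : ∀ i j : Fin d, f i j = (if i < j then f i j else 0) + (if j < i then f i j else 0) := by
    intro i j
    rcases lt_trichotomy i j with h | h | h
    · simp [h, not_lt.mpr h.le]
    · subst h; simp [hf]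
    · simp [h, not_lt.mpr h.le]
  have hU : ∑ i, ∑ j, (if i < j then f i j else 0) = T - S*S := by
    have h2 : (∑ i, ∑ j, (if i < j then f i j else 0)) + (∑ i, ∑ j, (if j < i then f i j else 0))
        = 2*T - 2*(S*S) := by
      rw [← hD]
      rw [← Finset.sum_add_distrib]
      apply Finset.sum_congr rfl; intro i _
      rw [← Finset.sum_add_distrib]
      exact (Finset.sum_congr rfl fun j _ => (hsplit i j).symm)
    have h3 : (∑ i, ∑ j, (if j < i then f i j else 0)) = ∑ i, ∑ j, (if i < j then f i j else 0) := by
      rw [Finset.sum_comm]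
      apply Finset.sum_congr rfl; intro i _
      apply Finset.sum_congr rfl; intro j _
      rw [hfsym]
    rw [h3] at h2
    linarith
  rw [lhs_eq]
  show α * T / S - α * S = (α / S) * ∑ i, ∑ j, (if i < j then f i j else 0)
  rw [hU]
  field_simp
end

section
/- The function H(z) = Σ_{i=1}^d z_i^α is a strict Lyapunov function for F(z) = −z + π(z) on the simplex: for every z ∈ Δ that is not an equilibrium of F (i.e., F(z) ≠ 0), one has ⟨∇H(z), F(z)⟩ > 0. -/
open Finset

theorem strict_lyapunov (d : ℕ) (hd : 2 ≤ d) (α : ℝ) (hα : 1 < α)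
    (z : Fin d → ℝ) (hz0 : ∀ i, 0 ≤ z i) (hz1 : ∑ i, z i = 1)
    (hne : (fun i : Fin d => -(z i) + z i ^ α / (∑ j, z j ^ α)) ≠ 0) :
    0 < ∑ i, (α * z i ^ (α - 1)) * (-(z i) + z i ^ α / (∑ j, z j ^ α)) := by
  set p : Fin d → ℝ := fun i => z i ^ (α - 1) with hp
  have hα0 : (0:ℝ) < α := by linarith
  have hp0 : ∀ i, 0 ≤ p i := fun i => Real.rpow_nonneg (hz0 i) _
  have hzp : ∀ i, z i ^ α = z i * p i := by
    intro i
    rcases eq_or_lt_of_le (hz0 i) with h | h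
    · rw [← h, Real.zero_rpow (by positivity), hp]
      simp
    · rw [hp]
      rw [show α = 1 + (α - 1) by ring, Real.rpow_add h, Real.rpow_one]
      norm_num
  set S := ∑ j, z j ^ α with hSdef
  have hST : S = ∑ i, z i * p i := Finset.sum_congr rfl fun i _ => hzp i
  have hex : ∃ i, 0 < z i := by
    by_contra h
    push_neg at h
    have : ∀ i, z i = 0 := fun i => le_antisymm (h i) (hz0 i)
    simp [this] at hz1
  have hS : 0 < S := by
    obtain ⟨i, hi⟩ := hex
    exact Finset.sum_pos' (fun j _ => Real.rpow_nonneg (hz0 j) _)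
      ⟨i, Finset.mem_univ i, Real.rpow_pos_of_pos hi _⟩
  -- extract a non-equilibrium index
  obtain ⟨i₀, hi₀⟩ := Function.ne_iff.mp hne
  have hzi₀ : 0 < z i₀ := by
    rcases eq_or_lt_of_le (hz0 i₀) with h | h
    · exfalso; apply hi₀
      simp [← h, Real.zero_rpow (ne_of_gt hα0)]
    · exact h
  have hpi₀ : p i₀ ≠ S := by
    intro h
    apply hi₀
    have : z i₀ ^ α / S = z i₀ := by
      rw [hzp i₀, h]
      field_simp
    simp [this]
  have hj₀ : ∃ j, 0 < z j ∧ p j ≠ p i₀ := by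
    by_contra h
    push_neg at h
    apply hpi₀
    have : ∀ j, z j * p j = z j * p i₀ := by
      intro j
      rcases eq_or_lt_of_le (hz0 j) with h0 | h0
      · rw [← h0]; ring
      · rw [h j h0]
    rw [hST, Finset.sum_congr rfl fun j _ => this j, ← Finset.sum_mul, hz1, one_mul]
  obtain ⟨j₀, hzj₀, hpj₀⟩ := hj₀
  -- double sum
  set T := ∑ i, z i * p i * p i with hT
  set D := ∑ i, ∑ j, z i * z j * (p i - p j)^2 with hD
  have hDpos : 0 < D := by
    apply Finset.sum_pos' (fun i _ => Finset.sum_nonneg fun j _ =>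
      mul_nonneg (mul_nonneg (hz0 i) (hz0 j)) (sq_nonneg _))
    refine ⟨i₀, Finset.mem_univ i₀, Finset.sum_pos'
      (fun j _ => mul_nonneg (mul_nonneg (hz0 i₀) (hz0 j)) (sq_nonneg _))
      ⟨j₀, Finset.mem_univ j₀, ?_⟩⟩
    have hsq : 0 < (p i₀ - p j₀)^2 :=
      pow_two_pos_of_ne_zero (sub_ne_zero.mpr fun h => hpj₀ h.symm)
    exact mul_pos (mul_pos hzi₀ hzj₀) hsq
  have hDval : D = 2 * T - 2 * S^2 := by
    have expand : ∀ i j : Fin d, z i * z j * (p i - p j)^2 =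
        (z i * p i * p i) * z j + z i * (z j * p j * p j) - 2 * ((z i * p i) * (z j * p j)) :=
      fun i j => by ring
    rw [hD]
    simp_rw [expand, Finset.sum_sub_distrib, Finset.sum_add_distrib, ← Finset.mul_sum,
      ← Finset.sum_mul, ← hT]
    rw [hz1, hST]
    ring
  have hTS : 0 < T - S^2 := by linarith
  have hgoal : ∑ i, (α * z i ^ (α - 1)) * (-(z i) + z i ^ α / S) = α * (T - S^2) / S := by
    have e : ∀ i, (α * z i ^ (α - 1)) * (-(z i) + z i ^ α / S) =
        α * (z i * p i * p i / S - z i * p i) := by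
      intro i
      rw [hzp i, hp]
      field_simp
      ring
    rw [Finset.sum_congr rfl fun i _ => e i, ← Finset.mul_sum, Finset.sum_sub_distrib,
      ← Finset.sum_div, ← hT, ← hST]
    field_simp
  rw [hgoal]
  positivity
end

section
/- A point z ∈ Δ satisfies F(z) = 0 if and only if there exists a nonempty subset S ⊆ {1,…,d} such that z_i = 1/|S| for i ∈ S and z_i = 0 for i ∉ S. -/
/-!
At an equilibrium every positive coordinate satisfies `z i = z i ^ α / T` with `T = ∑ j, z j ^ α`,
that is `z i ^ (α - 1) = T`. Since `x ↦ x ^ (α - 1)` is injective on `[0, ∞)` for `α ≠ 1`, all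
positive coordinates coincide, and `∑ i, z i = 1` forces their common value to be `1 / #S` on the
support `S`. Conversely, `π` maps each such uniform point to itself.
-/

open Finset

section UniformOn

variable {ι : Type*} [Fintype ι] [DecidableEq ι]

noncomputable def uniformOn (S : Finset ι) (i : ι) : ℝ := if i ∈ S then 1 / #S else 0

theorem sum_uniformOn_rpow (S : Finset ι) {α : ℝ} (hα : α ≠ 0) :
    ∑ j, uniformOn S j ^ α = #S * (1 / #S) ^ α := by
  simp only [uniformOn, apply_ite (· ^ α), Real.zero_rpow hα]
  rw [← sum_filter, filter_mem_eq_inter, univ_inter, sum_const, nsmul_eq_mul]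

theorem uniformOn_rpow_div_sum {S : Finset ι} (hS : S.Nonempty) {α : ℝ} (hα : α ≠ 0) (i : ι) :
    uniformOn S i ^ α / ∑ j, uniformOn S j ^ α = uniformOn S i := by
  have hcard : (0 : ℝ) < #S := by exact_mod_cast hS.card_pos
  have hpow : (0 : ℝ) < (1 / #S) ^ α := by positivity
  rw [sum_uniformOn_rpow S hα]
  by_cases hi : i ∈ S
  · simp only [uniformOn, if_pos hi]
    field_simp
  · simp [uniformOn, hi, Real.zero_rpow hα]

theorem exists_eq_uniformOn {z : ι → ℝ} (hz0 : ∀ i, 0 ≤ z i) (hz1 : ∑ i, z i = 1)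
    (hconst : ∀ i j, 0 < z i → 0 < z j → z i = z j) :
    ∃ S : Finset ι, S.Nonempty ∧ ∀ i, z i = uniformOn S i := by
  have hzero : ∀ i, ¬0 < z i → z i = 0 := fun i hi => le_antisymm (not_lt.1 hi) (hz0 i)
  set S := univ.filter (fun i => 0 < z i)
  have hsum : ∑ i ∈ S, z i = 1 := by
    rw [sum_filter, ← hz1]
    exact sum_congr rfl fun i _ => by split_ifs with hi <;> simp [hzero i, hi]
  obtain ⟨i₀, hi₀⟩ : S.Nonempty := nonempty_of_sum_ne_zero (hsum ▸ one_ne_zero)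
  have hpos₀ : 0 < z i₀ := (mem_filter.1 hi₀).2
  have hcard : (#S : ℝ) * z i₀ = 1 := by
    rw [← hsum, sum_congr rfl fun i hi => hconst i i₀ (mem_filter.1 hi).2 hpos₀, sum_const,
      nsmul_eq_mul]
  refine ⟨S, ⟨i₀, hi₀⟩, fun i => ?_⟩
  by_cases hi : 0 < z i
  · rw [uniformOn, if_pos (mem_filter.2 ⟨mem_univ i, hi⟩), hconst i i₀ hi hpos₀,
      eq_div_iff (left_ne_zero_of_mul_eq_one hcard), mul_comm, hcard]
  · simp [uniformOn, S, hzero i hi]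

end UniformOn

theorem rpow_sub_one_eq_of_eq_rpow_div {x α T : ℝ} (hx : x ≠ 0) (h : x = x ^ α / T) :
    x ^ (α - 1) = T := by
  have hT : T ≠ 0 := by
    rintro rfl
    exact hx (by simpa using h)
  rw [eq_div_iff hT] at h
  rw [Real.rpow_sub_one hx, div_eq_iff hx, ← h, mul_comm]

theorem equilibria_characterization_general (d : ℕ) (α : ℝ) (hα : 1 < α)
    (z : Fin d → ℝ) (hz0 : ∀ i, 0 ≤ z i) (hz1 : ∑ i, z i = 1) :
    (fun i : Fin d => -(z i) + z i ^ α / (∑ j, z j ^ α)) = 0 ↔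
      ∃ S : Finset (Fin d), S.Nonempty ∧
        ∀ i, z i = if i ∈ S then (1 : ℝ) / S.card else 0 := by
  simp only [funext_iff, Pi.zero_apply, neg_add_eq_zero]
  constructor
  · intro hfix
    refine exists_eq_uniformOn hz0 hz1 fun i j hi hj => ?_
    refine Real.rpow_left_injOn (x := α - 1) (by linarith) hi.le hj.le ?_
    exact (rpow_sub_one_eq_of_eq_rpow_div hi.ne' (hfix i)).trans
      (rpow_sub_one_eq_of_eq_rpow_div hj.ne' (hfix j)).symm
  · rintro ⟨S, hS, hzS⟩
    obtain rfl : z = uniformOn S := funext hzS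
    exact fun i => (uniformOn_rpow_div_sum hS (by linarith) i).symm

theorem equilibria_characterization (d : ℕ) (hd : 2 ≤ d) (α : ℝ) (hα : 1 < α)
    (z : Fin d → ℝ) (hz0 : ∀ i, 0 ≤ z i) (hz1 : ∑ i, z i = 1) :
    (fun i : Fin d => -(z i) + z i ^ α / (∑ j, z j ^ α)) = 0 ↔
      ∃ S : Finset (Fin d), S.Nonempty ∧
        ∀ i, z i = if i ∈ S then (1 : ℝ) / S.card else 0 :=
  equilibria_characterization_general d α hα z hz0 hz1
end

section
/- At each vertex e_j of the simplex, the Jacobian matrix of the vector field F(z) = −z + π(z) (restricted to a neighborhood where defined and extended smoothly) equals −I, the negative identity matrix. In particular all eigenvalues of DF(e_j) equal −1, so e_j is a linearly stable equilibrium. -/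
/-!
Since `α > 1`, the derivative `α x ^ (α - 1)` of `x ^ α` vanishes at `0` and equals `α` at `1`.
So at `e_j` the numerator `z_j ^ α` and the denominator `∑ z_k ^ α` of `π_j` both have value `1`
and differential `α dz_j`, while the numerators `z_i ^ α`, `i ≠ j`, vanish to first order.
Hence `π` is stationary at `e_j`, and `DF(e_j) = -I`.
-/

open Finset

section RpowNormalize

variable {ι : Type*} {α : ℝ}

theorem single_one_rpow [DecidableEq ι] (hα : α ≠ 0) (j k : ι) :
    (Pi.single j 1 : ι → ℝ) k ^ α = (Pi.single j 1 : ι → ℝ) k := by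
  rcases eq_or_ne k j with rfl | hk
  · simp
  · simp [hk, Real.zero_rpow hα]

variable [Fintype ι]

/-- The map `π` of the paper. -/
noncomputable def rpowNormalize (α : ℝ) (z : ι → ℝ) : ι → ℝ :=
  fun i => z i ^ α / ∑ k, z k ^ α

theorem hasFDerivAt_apply_rpow (hα : 1 ≤ α) (k : ι) (z : ι → ℝ) :
    HasFDerivAt (fun z : ι → ℝ => z k ^ α)
      ((α * z k ^ (α - 1)) • ContinuousLinearMap.proj (R := ℝ) (φ := fun _ : ι => ℝ) k) z :=
  (Real.hasDerivAt_rpow_const (Or.inr hα)).comp_hasFDerivAt z (hasFDerivAt_apply k z)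

theorem hasFDerivAt_rpowNormalize_single [DecidableEq ι] (hα : 1 < α) (j : ι) :
    HasFDerivAt (rpowNormalize α) (0 : (ι → ℝ) →L[ℝ] ι → ℝ) (Pi.single j 1) := by
  set p : ι → ℝ := Pi.single j 1
  have hpow (k : ι) : p k ^ (α - 1) = p k := single_one_rpow (by linarith) j k
  have hsum_eq : ∑ k, p k ^ α = 1 := by simp [p, single_one_rpow (by linarith : α ≠ 0)]
  have hnum (k : ι) : HasFDerivAt (fun z : ι → ℝ => z k ^ α)
      ((α * p k) • ContinuousLinearMap.proj (R := ℝ) (φ := fun _ : ι => ℝ) k) p := by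
    simpa only [hpow] using hasFDerivAt_apply_rpow hα.le k p
  have hsum : HasFDerivAt (fun z : ι → ℝ => ∑ k, z k ^ α)
      (α • ContinuousLinearMap.proj (R := ℝ) (φ := fun _ : ι => ℝ) j) p := by
    refine (HasFDerivAt.fun_sum fun k _ => hnum k).congr_fderiv ?_
    ext v
    simp [p, Pi.single_apply]
  have hinv := (hasDerivAt_inv (by rw [hsum_eq]; exact one_ne_zero)).comp_hasFDerivAt p hsum
  rw [hasFDerivAt_pi']
  intro i
  have hquot := (hnum i).fun_mul hinv
  simp only [Function.comp_def, ← div_eq_mul_inv] at hquot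
  refine hquot.congr_fderiv ?_
  ext v
  rcases eq_or_ne i j with rfl | hij
  · simp [p, hsum_eq]
  · simp [p, hij, Real.zero_rpow (by linarith : α ≠ 0)]

end RpowNormalize

theorem jacobian_at_vertex_general (d : ℕ) (α : ℝ) (hα : 1 < α) (j : Fin d)
    (F : (Fin d → ℝ) → (Fin d → ℝ))
    (hF : ∀ z : Fin d → ℝ, ∀ i, F z i = -(z i) + z i ^ α / (∑ k, z k ^ α)) :
    HasFDerivAt F (-(ContinuousLinearMap.id ℝ (Fin d → ℝ))) (Pi.single j 1) := by
  obtain rfl : F = fun z => -z + rpowNormalize α z := funext fun z => funext (hF z)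
  simpa using (hasFDerivAt_id _).neg.add (hasFDerivAt_rpowNormalize_single hα j)

/-- At each vertex `e_j` of the simplex, the Jacobian of `F(z) = -z + π(z)` is `-I`:
the vector field has derivative equal to minus the identity at `e_j`. -/
theorem jacobian_at_vertex (d : ℕ) (hd : 2 ≤ d) (α : ℝ) (hα : 1 < α) (j : Fin d)
    (F : (Fin d → ℝ) → (Fin d → ℝ))
    (hF : ∀ z : Fin d → ℝ, ∀ i, F z i = -(z i) + z i ^ α / (∑ k, z k ^ α)) :
    HasFDerivAt F (-(ContinuousLinearMap.id ℝ (Fin d → ℝ))) (Pi.single j 1) :=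
  jacobian_at_vertex_general d α hα j F hF
end

section
/- At the barycenter z* = (1/d, …, 1/d) of the simplex, the Jacobian of F(z) = −z + π(z) equals (α−1)I − (α/d)N, where N is the d×d all-ones matrix. Its eigenvalues are −1 (with eigenvector (1,…,1), multiplicity 1) and α−1 (with multiplicity d−1, eigenvectors the hyperplane Σ x_i = 0). Hence for α > 1 the barycenter is a linearly unstable equilibrium. -/
open Finset

/-!
The map `z ↦ z i ^ α / ∑ k, z k ^ α` is homogeneous of degree `0`, and at a constant point `c`
its derivative is `α / (n c)` times the `i`-th coordinate of the orthogonal projection onto the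
hyperplane `∑ x_k = 0`. At the barycenter `c = 1 / d` this gives `D F = -I + α (I - N / d)`, which
acts as `-1` on the diagonal `(1, …, 1)` and as `α - 1` on the hyperplane.
-/

section PowerNormalization

variable {ι : Type*} [Fintype ι] {α : ℝ}

theorem hasFDerivAt_rpow_div_sum_rpow {z : ι → ℝ} (hz : ∀ j, z j ≠ 0)
    (hS : ∑ k, z k ^ α ≠ 0) (i : ι) :
    HasFDerivAt (fun z : ι → ℝ => z i ^ α / ∑ k, z k ^ α)
      ((α * z i ^ (α - 1) / ∑ k, z k ^ α) • (ContinuousLinearMap.proj i : (ι → ℝ) →L[ℝ] ℝ)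
        - (α * z i ^ α / (∑ k, z k ^ α) ^ 2) •
          ∑ k, z k ^ (α - 1) • (ContinuousLinearMap.proj k : (ι → ℝ) →L[ℝ] ℝ)) z := by
  have hpow : ∀ j, HasFDerivAt (fun z : ι → ℝ => z j ^ α)
      ((α * z j ^ (α - 1)) • ContinuousLinearMap.proj j) z := fun j =>
    (ContinuousLinearMap.proj (R := ℝ) (φ := fun _ : ι => ℝ) j).hasFDerivAt.rpow_const
      (Or.inl (hz j))
  have hsum := HasFDerivAt.fun_sum (u := univ) fun j _ => hpow j
  have hinv := (hasDerivAt_inv hS).comp_hasFDerivAt z hsum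
  refine ((hpow i).mul hinv).congr_fderiv ?_
  ext v
  simp only [neg_smul, smul_neg, Function.comp_apply, add_apply, neg_apply, smul_apply,
    _root_.sum_apply, ContinuousLinearMap.proj_apply, smul_eq_mul, mul_assoc, ← mul_sum, sub_apply]
  field_simp
  ring

theorem hasFDerivAt_rpow_div_sum_rpow_const [Nonempty ι] {c : ℝ} (hc : 0 < c) (i : ι) :
    HasFDerivAt (fun z : ι → ℝ => z i ^ α / ∑ k, z k ^ α)
      ((α / (Fintype.card ι * c)) • ((ContinuousLinearMap.proj i : (ι → ℝ) →L[ℝ] ℝ)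
        - (Fintype.card ι : ℝ)⁻¹ • ∑ k, ContinuousLinearMap.proj k)) (fun _ => c) := by
  have hcα : 0 < c ^ α := Real.rpow_pos_of_pos hc α
  have hn : (0 : ℝ) < Fintype.card ι := by exact_mod_cast Fintype.card_pos
  refine (hasFDerivAt_rpow_div_sum_rpow (fun _ => hc.ne') (by simp; positivity) i).congr_fderiv ?_
  ext v
  simp only [Real.rpow_sub hc, Real.rpow_one, sum_const, card_univ, nsmul_eq_mul, sub_apply,
    smul_apply, ContinuousLinearMap.proj_apply, smul_eq_mul, _root_.sum_apply, ← mul_sum]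
  field_simp

end PowerNormalization

theorem fderiv_neg_add_rpow_div_sum_rpow_barycenter {ι : Type*} [Fintype ι] [DecidableEq ι]
    [Nonempty ι] (α : ℝ) (i k : ι) :
    fderiv ℝ (fun z : ι → ℝ => -(z i) + z i ^ α / ∑ k, z k ^ α) (fun _ => 1 / Fintype.card ι)
      (Pi.single k 1) = (α - 1) * (if i = k then 1 else 0) - α / Fintype.card ι := by
  have hn : (0 : ℝ) < Fintype.card ι := by exact_mod_cast Fintype.card_pos
  have hneg : HasFDerivAt (fun z : ι → ℝ => -(z i)) (-ContinuousLinearMap.proj i)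
      (fun _ => 1 / (Fintype.card ι : ℝ)) :=
    (ContinuousLinearMap.proj (R := ℝ) (φ := fun _ : ι => ℝ) i).hasFDerivAt.neg
  rw [(hneg.fun_add (hasFDerivAt_rpow_div_sum_rpow_const (one_div_pos.mpr hn) i)).fderiv]
  simp only [one_div, ne_eq, Nat.cast_eq_zero, Fintype.card_ne_zero, not_false_eq_true,
    mul_inv_cancel₀, div_one, add_apply, neg_apply, ContinuousLinearMap.proj_apply,
    Pi.single_apply, smul_apply, sub_apply, _root_.sum_apply, sum_ite_eq', mem_univ, ↓reduceIte,
    smul_eq_mul, mul_one, mul_ite, mul_zero]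
  split_ifs <;> field_simp <;> ring

theorem Matrix.smul_one_sub_smul_ones_mulVec {n R : Type*} [Fintype n] [DecidableEq n]
    [CommRing R] (a b : R) (x : n → R) :
    (a • (1 : Matrix n n R) - b • Matrix.of fun _ _ => (1 : R)).mulVec x
      = a • x - (b * ∑ i, x i) • fun _ => 1 := by
  ext i
  simp [Matrix.mulVec, dotProduct, sub_mul, Finset.sum_sub_distrib, Matrix.one_apply,
    ← Finset.mul_sum]

/-- At the barycenter `z* = (1/d, …, 1/d)`, the Jacobian matrix of
`F(z)_i = -z_i + z_i^α / ∑_j z_j^α` equals `(α-1)I - (α/d)N` where `N` is the all-ones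
matrix; the vector `(1,…,1)` is an eigenvector for the eigenvalue `-1`, and every vector of
the hyperplane `∑ x_i = 0` is an eigenvector for the eigenvalue `α-1` (which is positive
since `α > 1`, so the barycenter is linearly unstable). -/
theorem jacobian_at_barycenter (d : ℕ) (hd : 2 ≤ d) (α : ℝ) (hα : 1 < α)
    (F : (Fin d → ℝ) → (Fin d → ℝ))
    (hF : ∀ z : Fin d → ℝ, ∀ i, F z i = -(z i) + z i ^ α / (∑ k, z k ^ α))
    (DF : Matrix (Fin d) (Fin d) ℝ)
    (hDF : ∀ i k, DF i k =
      fderiv ℝ (fun z : Fin d → ℝ => F z i) (fun _ => (1 : ℝ) / d) (Pi.single k 1)) :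
    DF = (α - 1) • (1 : Matrix (Fin d) (Fin d) ℝ)
        - (α / d) • (Matrix.of fun _ _ => (1 : ℝ)) ∧
    DF.mulVec (fun _ => 1) = (-1 : ℝ) • (fun _ => (1 : ℝ)) ∧
    (∀ x : Fin d → ℝ, ∑ i, x i = 0 → DF.mulVec x = (α - 1) • x) ∧
    0 < α - 1 := by
  have : NeZero d := ⟨by omega⟩
  have hDF_eq : DF = (α - 1) • (1 : Matrix (Fin d) (Fin d) ℝ)
      - (α / d) • (Matrix.of fun _ _ => (1 : ℝ)) := by
    ext i k
    have hFi : (fun z => F z i) = fun z => -(z i) + z i ^ α / ∑ k, z k ^ α := funext (hF · i)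
    simpa [hDF, hFi, Matrix.one_apply] using
      fderiv_neg_add_rpow_div_sum_rpow_barycenter (ι := Fin d) α i k
  refine ⟨hDF_eq, ?_, fun x hx => ?_, by linarith⟩
  · rw [hDF_eq, Matrix.smul_one_sub_smul_ones_mulVec]
    ext i
    simp
  · rw [hDF_eq, Matrix.smul_one_sub_smul_ones_mulVec, hx, mul_zero, zero_smul, sub_zero]
end

section
/- Let z* ∈ Δ have z*_{j} = 1/k for j in a set S of size k (with 2 ≤ k ≤ d) and z*_j = 0 otherwise. Then the Jacobian DF(z*) of F(z) = −z + π(z) has eigenvalues −1 with multiplicity d − k + 1 and α − 1 with multiplicity k − 1. In particular, for α > 1 every such equilibrium is linearly unstable. -/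
/-!
At `z*` one has `∑ z*_j ^ α = k ^ (1 - α)`, and differentiating the quotient gives a block
diagonal `DF(z*)`: it is `-1 + α (1 - J / k)` on `S × S`, where `J` is the all-ones matrix, and
`-1` on the complement of `S`. The second block contributes `(X + 1) ^ (d - k)`; the first,
`(α - 1) • 1 - (α / k) • J`, is a scalar plus a rank-one matrix, whose characteristic polynomial
is `(X - (α - 1)) ^ (k - 1) * (X + 1)`.
-/

open Finset Polynomial

namespace Matrix

variable {R : Type*} [CommRing R] {n : Type*} [Fintype n] [DecidableEq n]

theorem charpoly_vecMulVec_add_scalar [Nonempty n] (u v : n → R) (c : R) :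
    (vecMulVec u v + scalar n c).charpoly
      = (X - C c) ^ (Fintype.card n - 1) * (X - C (c + u ⬝ᵥ v)) := by
  have hn : Fintype.card n = Fintype.card n - 1 + 1 := (Nat.sub_add_cancel Fintype.card_pos).symm
  rw [← sub_neg_eq_add, ← map_neg, charpoly_sub_scalar, charpoly_vecMulVec, hn, smul_eq_C_mul]
  simp only [sub_comp, mul_comp, pow_comp, X_comp, C_comp, Nat.add_sub_cancel, map_neg, C_add]
  ring

theorem toSquareBlockProp_charmatrix (M : Matrix n n R) (p : n → Prop) [DecidablePred p] :
    toSquareBlockProp (charmatrix M) p = charmatrix (toSquareBlockProp M p) := by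
  ext i j : 1
  by_cases hij : i = j
  · subst hij
    simp [toSquareBlockProp]
  · rw [charmatrix_apply_ne _ _ _ hij, toSquareBlockProp_def, of_apply,
      charmatrix_apply_ne _ _ _ (Subtype.val_injective.ne hij)]
    rfl

theorem twoBlockTriangular_charpoly (M : Matrix n n R) (p : n → Prop) [DecidablePred p]
    (h : ∀ i, ¬p i → ∀ j, p j → M i j = 0) :
    M.charpoly = (toSquareBlockProp M p).charpoly * (toSquareBlockProp M (¬p ·)).charpoly := by
  rw [charpoly, twoBlockTriangular_det _ p, toSquareBlockProp_charmatrix,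
    toSquareBlockProp_charmatrix]
  · rfl
  · intro i hi j hj
    rw [charmatrix_apply_ne _ _ _ (ne_of_apply_ne p (by simp [hi, hj])), h i hi j hj, map_zero,
      neg_zero]

theorem charpoly_of_apply_eq_neg_one_add_centering {K : Type*} [Field K] [CharZero K]
    (p : n → Prop) [DecidablePred p] [Nonempty {i // p i}] (a : K) (M : Matrix n n K)
    (hM : ∀ i j, M i j = -(if i = j then 1 else 0)
      + if p i ∧ p j then a * ((if i = j then 1 else 0) - 1 / Fintype.card {i // p i}) else 0) :
    M.charpoly = (X + C 1) ^ (Fintype.card n - Fintype.card {i // p i} + 1)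
      * (X - C (a - 1)) ^ (Fintype.card {i // p i} - 1) := by
  have hp : (Fintype.card {i // p i} : K) ≠ 0 := by exact_mod_cast Fintype.card_ne_zero
  have hblock : toSquareBlockProp M p
      = vecMulVec (fun _ => -(a / Fintype.card {i // p i})) (fun _ => 1) + scalar _ (a - 1) := by
    ext i j
    by_cases hij : i = j <;>
      simp [toSquareBlockProp, hM, hij, Subtype.val_injective.ne, vecMulVec_apply, i.2, j.2] <;>
      ring
  have hcompl : toSquareBlockProp M (¬p ·) = diagonal fun _ => -1 := by
    ext i j
    by_cases hij : i = j <;>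
      simp [toSquareBlockProp, hM, hij, Subtype.val_injective.ne, i.2, j.2]
  have hdot : (a - 1) + (fun _ : {i // p i} => -(a / Fintype.card {i // p i})) ⬝ᵥ (fun _ => 1)
      = -1 := by
    simp [dotProduct]
    field_simp
    ring
  rw [twoBlockTriangular_charpoly M p, hblock, hcompl, charpoly_vecMulVec_add_scalar, hdot,
    charpoly_diagonal]
  · simp [Fintype.card_subtype_compl]
    ring
  · intro i hi j hj
    simp [hM, hi, hj, ne_of_apply_ne p (by simp [hi, hj] : p i ≠ p j)]

end Matrix

section Jacobian

variable {ι : Type*} [Fintype ι] [DecidableEq ι] {α : ℝ}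

theorem fderiv_neg_add_rpow_div_sum_rpow_apply_single (hα : 1 ≤ α) {z : ι → ℝ}
    (hz : ∑ j, z j ^ α ≠ 0) (i j : ι) :
    fderiv ℝ (fun z : ι → ℝ => -(z i) + z i ^ α / ∑ j, z j ^ α) z (Pi.single j 1)
      = -(if i = j then 1 else 0) + α * ((if i = j then z i ^ (α - 1) else 0) / ∑ j, z j ^ α
          - z i ^ α * z j ^ (α - 1) / (∑ j, z j ^ α) ^ 2) := by
  have hpow (l : ι) : HasFDerivAt (fun z : ι → ℝ => z l ^ α)
      ((α * z l ^ (α - 1)) • ContinuousLinearMap.proj l) z :=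
    (hasFDerivAt_apply l z).rpow_const (Or.inr hα)
  have hinv : HasFDerivAt (fun z : ι → ℝ => (∑ j, z j ^ α)⁻¹) _ z :=
    (hasDerivAt_inv hz).comp_hasFDerivAt z (HasFDerivAt.fun_sum fun l _ => hpow l)
  have hF : HasFDerivAt (fun z : ι → ℝ => -(z i) + z i ^ α * (∑ j, z j ^ α)⁻¹) _ z :=
    (hasFDerivAt_apply i z).neg.add ((hpow i).fun_mul hinv)
  simp_rw [div_eq_mul_inv]
  rw [hF.fderiv]
  simp only [neg_smul, smul_neg, add_apply, neg_apply, ContinuousLinearMap.proj_apply, smul_apply,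
    _root_.sum_apply, Pi.single_apply, smul_eq_mul, mul_ite, mul_one, mul_zero, sum_ite_eq',
    mem_univ, if_true, ite_mul, zero_mul, add_right_inj]
  split_ifs <;> ring

theorem fderiv_neg_add_rpow_div_sum_rpow_apply_single_at_uniform (hα : 1 < α) {S : Finset ι}
    (hS : S.Nonempty) (i j : ι) :
    fderiv ℝ (fun z : ι → ℝ => -(z i) + z i ^ α / ∑ j, z j ^ α)
        (fun i => if i ∈ S then 1 / #S else 0) (Pi.single j 1)
      = -(if i = j then 1 else 0)
        + if i ∈ S ∧ j ∈ S then α * ((if i = j then 1 else 0) - 1 / #S) else 0 := by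
  set c : ℝ := 1 / #S
  have hc : 0 < c := by have := hS.card_pos; positivity
  have hc' : c ^ (α - 1) ≠ 0 := (Real.rpow_pos_of_pos hc _).ne'
  have hcα : c ^ α = c * c ^ (α - 1) := by
    rw [Real.rpow_sub_one hc.ne', mul_div_cancel₀ _ hc.ne']
  have hSc : (#S : ℝ) * c = 1 := mul_one_div_cancel (by positivity)
  have hzero : (0 : ℝ) ^ α = 0 := Real.zero_rpow (by linarith)
  have hzero' : (0 : ℝ) ^ (α - 1) = 0 := Real.zero_rpow (by linarith)
  have hsum : ∑ j, (if j ∈ S then c else 0) ^ α = c ^ (α - 1) := by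
    simp only [ite_pow, hzero, sum_ite_mem, univ_inter, sum_const, nsmul_eq_mul,
      hcα, ← mul_assoc, hSc, one_mul]
  rw [fderiv_neg_add_rpow_div_sum_rpow_apply_single hα.le (hsum ▸ hc'), hsum, ite_pow, ite_pow,
    ite_pow, hzero, hzero', hcα]
  by_cases hi : i ∈ S
  · by_cases hj : j ∈ S
    · simp only [hi, hj, and_self, if_true]
      split_ifs <;> field_simp; ring
    · simp [hi, hj, ne_of_mem_of_not_mem hi hj]
  · simp [hi]

end Jacobian

theorem jacobian_at_unstable_equilibrium_general (d : ℕ) (α : ℝ) (hα : 1 < α)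
    (S : Finset (Fin d)) (k : ℕ) (hk : S.card = k) (hk2 : 2 ≤ k)
    (F : (Fin d → ℝ) → (Fin d → ℝ))
    (hF : ∀ z : Fin d → ℝ, ∀ i, F z i = -(z i) + z i ^ α / (∑ j, z j ^ α))
    (zstar : Fin d → ℝ) (hzstar : ∀ i, zstar i = if i ∈ S then (1 : ℝ) / k else 0)
    (DF : Matrix (Fin d) (Fin d) ℝ)
    (hDF : ∀ i j, DF i j = fderiv ℝ (fun z : Fin d → ℝ => F z i) zstar (Pi.single j 1)) :
    DF.charpoly = (X + C 1) ^ (d - k + 1) * (X - C (α - 1)) ^ (k - 1) ∧ 0 < α - 1 := by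
  subst hk
  obtain rfl : zstar = fun i => if i ∈ S then (1 : ℝ) / #S else 0 := funext hzstar
  have hS : S.Nonempty := card_pos.mp (by omega)
  have : Nonempty {i // i ∈ S} := hS.coe_sort
  have hM (i j : Fin d) : DF i j = -(if i = j then 1 else 0)
      + if i ∈ S ∧ j ∈ S then α * ((if i = j then 1 else 0) - 1 / #S) else 0 := by
    rw [hDF, funext (hF · i)]
    exact fderiv_neg_add_rpow_div_sum_rpow_apply_single_at_uniform hα hS i j
  refine ⟨?_, by linarith⟩
  rw [Matrix.charpoly_of_apply_eq_neg_one_add_centering (· ∈ S) α DF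
    (by simpa only [Fintype.card_coe] using hM)]
  simp only [Fintype.card_coe, Fintype.card_fin]

/-- Let `z*` put mass `1/k` on each vertex of a set `S` of size `k` (`2 ≤ k ≤ d`) and `0`
elsewhere. Then the Jacobian matrix `DF(z*)` of `F(z)_i = -z_i + z_i^α / ∑_j z_j^α` has
eigenvalues `-1` with algebraic multiplicity `d - k + 1` and `α - 1` with algebraic
multiplicity `k - 1` (expressed via the characteristic polynomial); in particular `α - 1 > 0`
for `α > 1`, so every such equilibrium is linearly unstable. -/
theorem jacobian_at_unstable_equilibrium (d : ℕ) (hd : 2 ≤ d) (α : ℝ) (hα : 1 < α)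
    (S : Finset (Fin d)) (k : ℕ) (hk : S.card = k) (hk2 : 2 ≤ k)
    (F : (Fin d → ℝ) → (Fin d → ℝ))
    (hF : ∀ z : Fin d → ℝ, ∀ i, F z i = -(z i) + z i ^ α / (∑ j, z j ^ α))
    (zstar : Fin d → ℝ) (hzstar : ∀ i, zstar i = if i ∈ S then (1 : ℝ) / k else 0)
    (DF : Matrix (Fin d) (Fin d) ℝ)
    (hDF : ∀ i j, DF i j = fderiv ℝ (fun z : Fin d → ℝ => F z i) zstar (Pi.single j 1)) :
    DF.charpoly = (X + C 1) ^ (d - k + 1) * (X - C (α - 1)) ^ (k - 1) ∧ 0 < α - 1 :=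
  jacobian_at_unstable_equilibrium_general d α hα S k hk hk2 F hF zstar hzstar DF hDF
end

section
/- There exists a constant C depending only on α > 1 and d such that: whenever G: ℝ^d → ℝ^d is defined by G_i(x,y) = F_i(x, y*) − F_i(x, y) with F_i(z) = −z_i + z_i^α/Σ_j z_j^α and y* = 0 ∈ ℝ^{d−m}, for all (x,y) in a compact set where Σ_j z_j^α ≥ h > 0 and all components nonnegative, one has |F_i(x,y) − F_i(x,0)| ≤ C ‖y‖^α for 1 ≤ i ≤ m. -/
open Finset

/-- α-Hölder control in `y` of the first `m` components of `F`: there is a constant `C`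
(depending only on `α`, `d`, `m`, `h`) such that for every nonnegative `z = (x,y)` in the
compact set `{0 ≤ z_i ≤ 1}` with `H(z) ≥ h` and `H(x,0) ≥ h`, one has
`|F_i(x,y) - F_i(x,0)| ≤ C ‖y‖^α` for `1 ≤ i ≤ m`, where `F_i(z) = -z_i + z_i^α / H(z)`. -/
theorem holder_control_in_y (d m : ℕ) (hd : 2 ≤ d) (hm : 1 ≤ m) (hmd : m < d)
    (α : ℝ) (hα : 1 < α) (h : ℝ) (hh : 0 < h) :
    ∃ C : ℝ, 0 < C ∧
      ∀ z : Fin d → ℝ, (∀ i, 0 ≤ z i) → (∀ i, z i ≤ 1) →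
        h ≤ ∑ j, z j ^ α →
        h ≤ ∑ j : Fin d, (if (j : ℕ) < m then z j else 0) ^ α →
        ∀ i : Fin d, (i : ℕ) < m →
          |(-(z i) + z i ^ α / (∑ j, z j ^ α))
            - (-(z i) + z i ^ α / (∑ j : Fin d, (if (j : ℕ) < m then z j else 0) ^ α))|
          ≤ C * (Real.sqrt (∑ j ∈ Finset.univ.filter (fun j : Fin d => m ≤ (j : ℕ)),
              z j ^ 2)) ^ α := by
  have hd0 : (0:ℝ) < d := by exact_mod_cast Nat.lt_of_lt_of_le Nat.zero_lt_two hd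
  refine ⟨d / h ^ 2, by positivity, ?_⟩
  intro z hz0 hz1 hS hT i him
  set S := ∑ j, z j ^ α with hSdef
  set T := ∑ j : Fin d, (if (j : ℕ) < m then z j else 0) ^ α with hTdef
  set N := Real.sqrt (∑ j ∈ Finset.univ.filter (fun j : Fin d => m ≤ (j : ℕ)), z j ^ 2)
    with hNdef
  have hα0 : (0:ℝ) < α := by linarith
  have hS0 : 0 < S := lt_of_lt_of_le hh hS
  have hT0 : 0 < T := lt_of_lt_of_le hh hT
  have hN0 : 0 ≤ N := Real.sqrt_nonneg _
  -- T equals the sum over j < m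
  have hTeq : T = ∑ j ∈ Finset.univ.filter (fun j : Fin d => (j : ℕ) < m), z j ^ α := by
    rw [hTdef, ← Finset.sum_filter_add_sum_filter_not Finset.univ
      (fun j : Fin d => (j : ℕ) < m)]
    have h1 : ∑ j ∈ Finset.univ.filter (fun j : Fin d => ¬ (j : ℕ) < m),
        (if (j : ℕ) < m then z j else 0) ^ α = 0 := by
      apply Finset.sum_eq_zero
      intro j hj
      simp only [Finset.mem_filter] at hj
      rw [if_neg hj.2, Real.zero_rpow (ne_of_gt hα0)]
    rw [h1, add_zero]
    apply Finset.sum_congr rfl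
    intro j hj
    simp only [Finset.mem_filter] at hj
    rw [if_pos hj.2]
  -- the remainder R
  set R := ∑ j ∈ Finset.univ.filter (fun j : Fin d => m ≤ (j : ℕ)), z j ^ α with hRdef
  have hsplit : S = T + R := by
    rw [hTeq, hRdef, hSdef, ← Finset.sum_filter_add_sum_filter_not Finset.univ
      (fun j : Fin d => (j : ℕ) < m)]
    congr 1
    apply Finset.sum_congr
    · apply Finset.filter_congr
      intro j _
      simp [not_lt]
    · intros; rfl
  have hR0 : 0 ≤ R := Finset.sum_nonneg fun j _ => Real.rpow_nonneg (hz0 j) α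
  -- each z j with m ≤ j is ≤ N
  have hRle : R ≤ d * N ^ α := by
    have hstep : ∀ j ∈ Finset.univ.filter (fun j : Fin d => m ≤ (j : ℕ)),
        z j ^ α ≤ N ^ α := by
      intro j hj
      apply Real.rpow_le_rpow (hz0 j) _ (le_of_lt hα0)
      have h1 : z j ^ 2 ≤ ∑ k ∈ Finset.univ.filter (fun k : Fin d => m ≤ (k : ℕ)), z k ^ 2 :=
        Finset.single_le_sum (fun k _ => sq_nonneg (z k)) hj
      have h2 : z j = Real.sqrt (z j ^ 2) := (Real.sqrt_sq (hz0 j)).symm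
      rw [h2, hNdef]
      exact Real.sqrt_le_sqrt h1
    calc R ≤ ∑ j ∈ Finset.univ.filter (fun j : Fin d => m ≤ (j : ℕ)), N ^ α :=
          Finset.sum_le_sum hstep
      _ = (Finset.univ.filter (fun j : Fin d => m ≤ (j : ℕ))).card * N ^ α := by
          rw [Finset.sum_const, nsmul_eq_mul]
      _ ≤ d * N ^ α := by
          apply mul_le_mul_of_nonneg_right _ (Real.rpow_nonneg hN0 α)
          have := Finset.card_filter_le (Finset.univ : Finset (Fin d))
            (fun j : Fin d => m ≤ (j : ℕ))
          have hcard : (Finset.univ : Finset (Fin d)).card = d := Finset.card_univ.trans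
            (Fintype.card_fin d)
          exact_mod_cast hcard ▸ this
  have hzi1 : z i ^ α ≤ 1 := Real.rpow_le_one (hz0 i) (hz1 i) (le_of_lt hα0)
  have hzi0 : 0 ≤ z i ^ α := Real.rpow_nonneg (hz0 i) α
  have key : (-(z i) + z i ^ α / S) - (-(z i) + z i ^ α / T)
      = -(z i ^ α * R) / (S * T) := by
    rw [hsplit]
    field_simp
    ring
  rw [key, abs_div, abs_neg, abs_of_nonneg (mul_nonneg hzi0 hR0),
    abs_of_nonneg (le_of_lt (mul_pos hS0 hT0))]
  have hdenom : h * h ≤ S * T := mul_le_mul hS hT (le_of_lt hh) (le_of_lt hS0)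
  have hnum : z i ^ α * R ≤ 1 * (d * N ^ α) :=
    mul_le_mul hzi1 hRle hR0 zero_le_one
  calc z i ^ α * R / (S * T) ≤ 1 * (d * N ^ α) / (h * h) := by
        apply div_le_div₀ (by positivity) hnum (by positivity) hdenom
    _ = d / h ^ 2 * N ^ α := by rw [one_mul, sq]; ring
end
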